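/- Let Ω ⊆ ℝ^d be bounded and open, let α, β, τ > 0, let c : ℝ → ℝ be measurable with 0 < c̲ ≤ c(x) ≤ c̄ for all x, and let d : ℝ → ℝ be continuously differentiable with d ≥ 0 and |d'(x)| ≤ K for all x. Let V be a finite-dimensional linear subspace of the space of functions ℝ^d → ℝ all of whose elements are continuously differentiable on ℝ^d, and assume that no nonzero element of V vanishes almost everywhere on Ω. Then for every R ∈ V there exists S ∈ V such that for all v ∈ V: ∫_Ω [ c(|∇R(x)|) τ⁻¹ (S(x) − R(x)) v(x) + α ∇S(x)·∇v(x) + β D(S(x), R(x)) v(x) ] dx = 0. -/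

import Mathlib

open MeasureTheory Set
open scoped RealInnerProductSpace

/-- The difference quotient `D(a,b) = (d(a) − d(b))/(a − b)` of a differentiable
function `d`, with `D(a,a) = d'(a)`. -/
noncomputable def diffQuot (d : ℝ → ℝ) (a b : ℝ) : ℝ :=
  if a = b then deriv d a else (d a - d b) / (a - b)

/-!
Instead of a fixed-point argument, solve the time step as the Euler–Lagrange equation of the
energy `E(S) = ∫_Ω c(|∇R|) (S − R)² / (2τ) + α/2 |∇S|² + β Φ(R, S)`, where `Φ(b, ·)` is the
primitive of `D(·, b)` vanishing at `b`. Since `|D| ≤ K`, `|Φ(R, S)| ≤ K |S − R|`, and Young's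
inequality bounds `E(S)` below by a positive multiple of `∫_Ω (S − R)²` minus a constant. On the
finite-dimensional space `V` this integral is the square of a norm, because no nonzero element of
`V` vanishes a.e. on `Ω`; so `E` is continuous and coercive on `V` and attains its minimum there.
Differentiating `t ↦ E(S + t v)` under the integral at the minimiser gives the weak form.
-/

open Filter Bornology Metric
open scoped Gradient

section DiffQuot

open intervalIntegral

variable {d : ℝ → ℝ}

theorem diffQuot_eq_integral (hd : ContDiff ℝ 1 d) (a b : ℝ) :
    diffQuot d a b = ∫ t in (0 : ℝ)..1, deriv d (b + (a - b) * t) := by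
  rcases eq_or_ne a b with rfl | hab
  · simp [diffQuot]
  have hsub : a - b ≠ 0 := sub_ne_zero.2 hab
  rw [integral_comp_add_mul _ hsub, mul_zero, mul_one, add_zero, add_sub_cancel,
    integral_deriv_eq_sub (fun x _ => hd.differentiable one_ne_zero x)
      ((hd.continuous_deriv le_rfl).intervalIntegrable _ _),
    diffQuot, if_neg hab, smul_eq_mul, inv_mul_eq_div]

theorem continuous_diffQuot (hd : ContDiff ℝ 1 d) :
    Continuous fun p : ℝ × ℝ => diffQuot d p.1 p.2 := by
  simp_rw [diffQuot_eq_integral hd]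
  have := hd.continuous_deriv le_rfl
  exact continuous_parametric_intervalIntegral_of_continuous' (by fun_prop) 0 1

theorem abs_diffQuot_le (hd : ContDiff ℝ 1 d) {K : ℝ} (hK : ∀ x, |deriv d x| ≤ K) (a b : ℝ) :
    |diffQuot d a b| ≤ K := by
  simpa [diffQuot_eq_integral hd] using
    norm_integral_le_of_norm_le_const (a := 0) (b := 1) fun t _ =>
      (Real.norm_eq_abs _).trans_le (hK (b + (a - b) * t))

end DiffQuot

noncomputable def diffQuotPotential (d : ℝ → ℝ) (b s : ℝ) : ℝ :=
  ∫ u in b..s, diffQuot d u b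

section DiffQuotPotential

open intervalIntegral

variable {d : ℝ → ℝ}

theorem continuous_diffQuotPotential (hd : ContDiff ℝ 1 d) :
    Continuous fun p : ℝ × ℝ => diffQuotPotential d p.1 p.2 := by
  have hshift : ∀ b s,
      diffQuotPotential d b s = ∫ u in (0 : ℝ)..s - b, diffQuot d (b + u) b := fun b s => by
    rw [integral_comp_add_left (fun u => diffQuot d u b), add_zero, add_sub_cancel,
      diffQuotPotential]
  simp_rw [hshift]
  have := continuous_diffQuot hd
  exact (continuous_parametric_primitive_of_continuous
    (f := fun b u => diffQuot d (b + u) b) (by fun_prop)).comp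
    (by fun_prop : Continuous fun p : ℝ × ℝ => (p.1, p.2 - p.1))

theorem abs_diffQuotPotential_le (hd : ContDiff ℝ 1 d) {K : ℝ} (hK : ∀ x, |deriv d x| ≤ K)
    (b s : ℝ) : |diffQuotPotential d b s| ≤ K * |s - b| :=
  norm_integral_le_of_norm_le_const (f := fun u => diffQuot d u b) fun u _ =>
    abs_diffQuot_le hd hK u b

theorem hasDerivAt_diffQuotPotential (hd : ContDiff ℝ 1 d) (b s : ℝ) :
    HasDerivAt (diffQuotPotential d b) (diffQuot d s b) s :=
  ((continuous_diffQuot hd).comp (continuous_id.prodMk continuous_const)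
    |>.integral_hasStrictDerivAt b s).hasDerivAt

end DiffQuotPotential

section Gradient

variable {F : Type*} [NormedAddCommGroup F] [InnerProductSpace ℝ F] [CompleteSpace F]
  {f g : F → ℝ} {x : F}

theorem gradient_add (hf : DifferentiableAt ℝ f x) (hg : DifferentiableAt ℝ g x) :
    ∇ (f + g) x = ∇ f x + ∇ g x := by
  simp [gradient, fderiv_add hf hg]

theorem gradient_const_smul (c : ℝ) (hf : DifferentiableAt ℝ f x) :
    ∇ (c • f) x = c • ∇ f x := by
  simp [gradient, fderiv_const_smul hf]

theorem gradient_sum {ι : Type*} (u : Finset ι) {A : ι → F → ℝ}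
    (hA : ∀ i ∈ u, DifferentiableAt ℝ (A i) x) :
    ∇ (∑ i ∈ u, A i) x = ∑ i ∈ u, ∇ (A i) x := by
  simp [gradient, fderiv_sum hA]

theorem ContDiff.continuous_gradient (hf : ContDiff ℝ 1 f) : Continuous (∇ f) :=
  (InnerProductSpace.toDual ℝ F).symm.continuous.comp (hf.continuous_fderiv one_ne_zero)

end Gradient

theorem mul_le_div_mul_sq_add_mul_sq_div {c t : ℝ} (hc : 0 < c) (ht : 0 < t) (a B : ℝ) :
    a * B ≤ c / (4 * t) * a ^ 2 + t * B ^ 2 / c := by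
  have hsq : c / (4 * t) * a ^ 2 + t * B ^ 2 / c - a * B
      = (c * a - 2 * t * B) ^ 2 / (4 * t * c) := by
    field_simp
    ring
  linarith [div_nonneg (sq_nonneg (c * a - 2 * t * B)) (by positivity : (0 : ℝ) ≤ 4 * t * c)]

section Coercivity

variable {E : Type*}

theorem exists_pos_mul_sq_norm_le [NormedAddCommGroup E] [NormedSpace ℝ E]
    [FiniteDimensional ℝ E] {q : E → ℝ} (hq : Continuous q)
    (hhom : ∀ (t : ℝ) z, q (t • z) = t ^ 2 * q z) (hpos : ∀ z ≠ 0, 0 < q z) :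
    ∃ δ > 0, ∀ z, δ * ‖z‖ ^ 2 ≤ q z := by
  have hq0 : q 0 = 0 := by simpa using hhom 0 0
  rcases subsingleton_or_nontrivial E with hE | hE
  · exact ⟨1, one_pos, fun z => by simp [Subsingleton.elim z 0, hq0]⟩
  obtain ⟨z₀, hz₀, hmin⟩ := (isCompact_sphere (0 : E) 1).exists_isMinOn
    (NormedSpace.sphere_nonempty.2 zero_le_one) hq.continuousOn
  refine ⟨q z₀, hpos z₀ (ne_zero_of_mem_sphere one_ne_zero ⟨z₀, hz₀⟩), fun z => ?_⟩
  rcases eq_or_ne z 0 with rfl | hz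
  · simp [hq0]
  have hunit : ‖z‖⁻¹ • z ∈ sphere (0 : E) 1 := by simp [norm_smul, hz]
  calc q z₀ * ‖z‖ ^ 2 ≤ q (‖z‖⁻¹ • z) * ‖z‖ ^ 2 := by gcongr; exact hmin hunit
    _ = q z := by rw [hhom, inv_pow]; field_simp

theorem tendsto_cocompact_atTop_of_sq_dist_le [PseudoMetricSpace E] [ProperSpace E] {f : E → ℝ}
    {a C : ℝ} (ha : 0 < a) (y₀ : E) (hf : ∀ y, a * dist y y₀ ^ 2 - C ≤ f y) :
    Tendsto f (cocompact E) atTop :=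
  tendsto_atTop_mono hf <| (tendsto_atTop_add_const_right _ (-C)
    ((tendsto_pow_atTop two_ne_zero).const_mul_atTop ha)).comp
    (tendsto_dist_right_cocompact_atTop y₀)

end Coercivity

/-! Integrands `G (w x) p x` with `G` jointly continuous and `w` measurable with values in a
compact set are uniformly bounded on `N × Ω` for compact `N` and bounded `Ω`, so a constant
dominates them and the parametric integral theorems apply. -/

section ParametricIntegral

variable {X P : Type*} [MetricSpace X] [ProperSpace X] [MeasurableSpace X] [BorelSpace X]
  {μ : Measure X} {Ω : Set X} {w : X → ℝ} {T : Set ℝ}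

theorem exists_ae_bound_of_continuous [TopologicalSpace P] {G : ℝ → P → X → ℝ}
    (hΩ : IsBounded Ω) (hT : IsCompact T) (hwT : ∀ x, w x ∈ T) {N : Set P} (hN : IsCompact N)
    (hG : Continuous fun q : ℝ × P × X => G q.1 q.2.1 q.2.2) :
    ∃ M, ∀ᵐ x ∂μ.restrict Ω, ∀ p ∈ N, ‖G (w x) p x‖ ≤ M := by
  obtain ⟨M, hM⟩ :=
    (hT.prod (hN.prod hΩ.isCompact_closure)).exists_bound_of_continuousOn hG.continuousOn
  -- `Ω` need not be measurable, unlike its closure.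
  exact ⟨M, ae_restrict_of_ae_restrict_of_subset subset_closure <|
    ae_restrict_of_forall_mem isClosed_closure.measurableSet fun x hx p hp =>
      hM (w x, p, x) ⟨hwT x, hp, hx⟩⟩

theorem aestronglyMeasurable_of_continuous {g : ℝ → X → ℝ} (hw : Measurable w)
    (hg : Continuous fun q : ℝ × X => g q.1 q.2) :
    AEStronglyMeasurable (fun x => g (w x) x) μ :=
  (hg.measurable.comp (hw.prodMk measurable_id)).aestronglyMeasurable

variable [IsFiniteMeasureOnCompacts μ]

theorem integrableOn_of_continuous {g : ℝ → X → ℝ} (hΩ : IsBounded Ω) (hw : Measurable w)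
    (hT : IsCompact T) (hwT : ∀ x, w x ∈ T) (hg : Continuous fun q : ℝ × X => g q.1 q.2) :
    IntegrableOn (fun x => g (w x) x) Ω μ := by
  have := isFiniteMeasure_restrict.2 (hΩ.measure_lt_top (μ := μ)).ne
  obtain ⟨M, hM⟩ := exists_ae_bound_of_continuous (μ := μ) (G := fun s (_ : Unit) x => g s x)
    hΩ hT hwT isCompact_univ (hg.comp (continuous_fst.prodMk continuous_snd.snd))
  exact Integrable.of_bound (aestronglyMeasurable_of_continuous hw hg) M
    (hM.mono fun x hx => hx () trivial)

theorem continuous_setIntegral_of_continuous [TopologicalSpace P] [LocallyCompactSpace P]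
    [FirstCountableTopology P] {G : ℝ → P → X → ℝ} (hΩ : IsBounded Ω) (hw : Measurable w)
    (hT : IsCompact T) (hwT : ∀ x, w x ∈ T)
    (hG : Continuous fun q : ℝ × P × X => G q.1 q.2.1 q.2.2) :
    Continuous fun p => ∫ x in Ω, G (w x) p x ∂μ := by
  have := isFiniteMeasure_restrict.2 (hΩ.measure_lt_top (μ := μ)).ne
  refine continuous_iff_continuousAt.2 fun p₀ => ?_
  obtain ⟨N, hN, hNp₀⟩ := exists_compact_mem_nhds p₀
  obtain ⟨M, hM⟩ := exists_ae_bound_of_continuous hΩ hT hwT hN hG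
  exact continuousAt_of_dominated (bound := fun _ => M)
    (Eventually.of_forall fun p =>
      aestronglyMeasurable_of_continuous (g := fun s x => G s p x) hw
        (hG.comp (continuous_fst.prodMk (continuous_const.prodMk continuous_snd))))
    (eventually_of_mem hNp₀ fun p hp => hM.mono fun x hx => hx p hp) (integrable_const M)
    (ae_of_all _ fun x =>
      (hG.comp (continuous_const.prodMk (continuous_id.prodMk continuous_const))).continuousAt)

theorem hasDerivAt_setIntegral_of_continuous {G G' : ℝ → ℝ → X → ℝ} (hΩ : IsBounded Ω)
    (hw : Measurable w) (hT : IsCompact T) (hwT : ∀ x, w x ∈ T)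
    (hG : Continuous fun q : ℝ × ℝ × X => G q.1 q.2.1 q.2.2)
    (hG' : Continuous fun q : ℝ × ℝ × X => G' q.1 q.2.1 q.2.2)
    (hderiv : ∀ s t x, HasDerivAt (fun t => G s t x) (G' s t x) t) (t₀ : ℝ) :
    HasDerivAt (fun t => ∫ x in Ω, G (w x) t x ∂μ) (∫ x in Ω, G' (w x) t₀ x ∂μ) t₀ := by
  have := isFiniteMeasure_restrict.2 (hΩ.measure_lt_top (μ := μ)).ne
  obtain ⟨M, hM⟩ := exists_ae_bound_of_continuous hΩ hT hwT (isCompact_closedBall t₀ 1) hG'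
  have hsection : ∀ {H : ℝ → ℝ → X → ℝ},
      (Continuous fun q : ℝ × ℝ × X => H q.1 q.2.1 q.2.2) →
        ∀ t, Continuous fun q : ℝ × X => H q.1 t q.2 :=
    fun hH t => hH.comp (continuous_fst.prodMk (continuous_const.prodMk continuous_snd))
  exact (hasDerivAt_integral_of_dominated_loc_of_deriv_le (μ := μ.restrict Ω)
    (F := fun t x => G (w x) t x) (F' := fun t x => G' (w x) t x) (ball_mem_nhds t₀ one_pos)
    (Eventually.of_forall fun t =>
      aestronglyMeasurable_of_continuous (g := fun s x => G s t x) hw (hsection hG t))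
    (integrableOn_of_continuous (g := fun s x => G s t₀ x) hΩ hw hT hwT (hsection hG t₀))
    (aestronglyMeasurable_of_continuous (g := fun s x => G' s t₀ x) hw (hsection hG' t₀))
    (hM.mono fun x hx t ht => hx t (ball_subset_closedBall ht)) (integrable_const M)
    (ae_of_all _ fun x t _ => hderiv (w x) t x)).2

theorem exists_pos_mul_sq_norm_le_integral_sq (hΩ : IsBounded Ω) {ι : Type*} [Fintype ι]
    {b : ι → X → ℝ} (hb : ∀ i, Continuous (b i))
    (hb0 : ∀ y : ι → ℝ, (∀ᵐ x ∂μ.restrict Ω, (∑ i, y i • b i) x = 0) → y = 0) :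
    ∃ δ > 0, ∀ y : ι → ℝ, δ * ‖y‖ ^ 2 ≤ ∫ x in Ω, (∑ i, y i • b i) x ^ 2 ∂μ := by
  have hval : ∀ (y : ι → ℝ) x, (∑ i, y i • b i) x = ∑ i, y i * b i x := by
    simp [Finset.sum_apply]
  simp only [hval] at hb0 ⊢
  have hint : ∀ y : ι → ℝ, IntegrableOn (fun x => (∑ i, y i * b i x) ^ 2) Ω μ := fun y =>
    integrableOn_of_continuous (w := fun _ => 0) (g := fun _ x => (∑ i, y i * b i x) ^ 2) hΩ
      measurable_const isCompact_singleton (fun _ => rfl) (by fun_prop)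
  refine exists_pos_mul_sq_norm_le ?_ (fun t y => ?_) (fun y hy => ?_)
  · exact continuous_setIntegral_of_continuous (w := fun _ => 0) (T := {0})
      (G := fun _ (y : ι → ℝ) x => (∑ i, y i * b i x) ^ 2) hΩ measurable_const
      isCompact_singleton (fun _ => rfl) (by fun_prop)
  · simp only [Pi.smul_apply, smul_eq_mul, mul_assoc, ← Finset.mul_sum, mul_pow,
      integral_const_mul]
  · refine (integral_nonneg fun x => sq_nonneg _).lt_of_ne fun h => hy (hb0 y ?_)
    filter_upwards [(integral_eq_zero_iff_of_nonneg (fun x => sq_nonneg _) (hint y)).1 h.symm]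
      with x hx
    exact pow_eq_zero_iff two_ne_zero |>.1 hx

end ParametricIntegral

section StepEnergy

variable {X : Type*} [NormedAddCommGroup X] [InnerProductSpace ℝ X] [FiniteDimensional ℝ X]
  [MeasurableSpace X] [BorelSpace X] {μ : Measure X} [IsFiniteMeasureOnCompacts μ] {Ω : Set X}
  {α β τ : ℝ} {d : ℝ → ℝ} {w R : X → ℝ}

noncomputable def stepEnergy (μ : Measure X) (Ω : Set X) (α β τ : ℝ) (d : ℝ → ℝ)
    (w R S : X → ℝ) : ℝ :=
  ∫ x in Ω, (w x * (S x - R x) ^ 2 / (2 * τ) + α / 2 * ‖∇ S x‖ ^ 2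
    + β * diffQuotPotential d (R x) (S x)) ∂μ

theorem hasDerivAt_stepEnergy_add_smul {T : Set ℝ} (hΩ : IsBounded Ω) (hw : Measurable w)
    (hT : IsCompact T) (hwT : ∀ x, w x ∈ T) (hd : ContDiff ℝ 1 d) (hR : Continuous R)
    {S v : X → ℝ} (hS : ContDiff ℝ 1 S) (hv : ContDiff ℝ 1 v) :
    HasDerivAt (fun t : ℝ => stepEnergy μ Ω α β τ d w R (S + t • v))
      (∫ x in Ω, (w x * τ⁻¹ * (S x - R x) * v x + α * ⟪∇ S x, ∇ v x⟫
        + β * diffQuot d (S x) (R x) * v x) ∂μ) 0 := by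
  have hgrad : ∀ (t : ℝ) x, ∇ (S + t • v) x = ∇ S x + t • ∇ v x := fun t x => by
    rw [gradient_add (hS.differentiable one_ne_zero x)
      ((hv.differentiable one_ne_zero x).const_smul t),
      gradient_const_smul t (hv.differentiable one_ne_zero x)]
  have := hS.continuous; have := hv.continuous
  have := hS.continuous_gradient; have := hv.continuous_gradient
  have := continuous_diffQuotPotential hd; have := continuous_diffQuot hd
  have key := hasDerivAt_setIntegral_of_continuous (μ := μ)
    (G := fun s t x => s * (S x + t * v x - R x) ^ 2 / (2 * τ)
      + α / 2 * ‖∇ S x + t • ∇ v x‖ ^ 2 + β * diffQuotPotential d (R x) (S x + t * v x))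
    (G' := fun s t x => s * τ⁻¹ * (S x + t * v x - R x) * v x
      + α * ⟪∇ S x + t • ∇ v x, ∇ v x⟫ + β * diffQuot d (S x + t * v x) (R x) * v x)
    hΩ hw hT hwT (by fun_prop) (by fun_prop) (fun s t x => ?_) 0
  · simpa [stepEnergy, hgrad] using key
  have hline : HasDerivAt (fun t => S x + t * v x) (v x) t := by
    simpa using (hasDerivAt_mul_const (v x)).const_add (S x)
  have h1 := (((hline.sub_const (R x)).pow 2).const_mul s).div_const (2 * τ)
  have h2 :=
    ((((hasDerivAt_id t).smul_const (∇ v x)).const_add (∇ S x)).norm_sq).const_mul (α / 2)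
  have h3 := ((hasDerivAt_diffQuotPotential hd (R x) _).comp t hline).const_mul β
  refine ((h1.add h2).add h3).congr_deriv ?_
  simp only [id, one_smul, Nat.cast_ofNat]
  field_simp
  ring

theorem le_stepEnergy {cl cu K : ℝ} (hΩ : IsBounded Ω) (hw : Measurable w)
    (hwb : ∀ x, w x ∈ Icc cl cu) (hcl : 0 < cl) (hα : 0 ≤ α) (hτ : 0 < τ) (hd : ContDiff ℝ 1 d)
    (hK : ∀ x, |deriv d x| ≤ K) (hR : Continuous R) {S : X → ℝ} (hS : ContDiff ℝ 1 S) :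
    cl / (4 * τ) * ∫ x in Ω, (S x - R x) ^ 2 ∂μ - τ * (β * K) ^ 2 / cl * μ.real Ω
      ≤ stepEnergy μ Ω α β τ d w R S := by
  have hpt : ∀ x, cl / (4 * τ) * (S x - R x) ^ 2 - τ * (β * K) ^ 2 / cl
      ≤ w x * (S x - R x) ^ 2 / (2 * τ) + α / 2 * ‖∇ S x‖ ^ 2
        + β * diffQuotPotential d (R x) (S x) := by
    intro x
    set u := S x - R x
    have hβΦ : -(|u| * (|β| * K)) ≤ β * diffQuotPotential d (R x) (S x) := by
      refine neg_le_of_abs_le ?_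
      rw [abs_mul, show |u| * (|β| * K) = |β| * (K * |u|) by ring]
      exact mul_le_mul_of_nonneg_left (abs_diffQuotPotential_le hd hK _ _) (abs_nonneg β)
    have hyoung := mul_le_div_mul_sq_add_mul_sq_div hcl hτ |u| (|β| * K)
    rw [sq_abs, mul_pow, sq_abs, ← mul_pow] at hyoung
    have hwu : 2 * (cl / (4 * τ) * u ^ 2) ≤ w x * u ^ 2 / (2 * τ) := by
      rw [show 2 * (cl / (4 * τ) * u ^ 2) = cl * u ^ 2 / (2 * τ) by field_simp; ring]
      gcongr
      exact (hwb x).1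
    have : 0 ≤ α / 2 * ‖∇ S x‖ ^ 2 := by positivity
    linarith [hwu, hyoung, hβΦ]
  have := hS.continuous; have := hS.continuous_gradient
  have := continuous_diffQuotPotential hd
  have hsq : IntegrableOn (fun x => (S x - R x) ^ 2) Ω μ :=
    integrableOn_of_continuous (g := fun _ x => (S x - R x) ^ 2) hΩ hw isCompact_Icc hwb
      (by fun_prop)
  have hconst : IntegrableOn (fun _ => τ * (β * K) ^ 2 / cl) Ω μ :=
    integrableOn_const (hΩ.measure_lt_top (μ := μ)).ne
  calc _ = ∫ x in Ω, (cl / (4 * τ) * (S x - R x) ^ 2 - τ * (β * K) ^ 2 / cl) ∂μ := by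
        rw [integral_sub (hsq.const_mul _) hconst, integral_const_mul, setIntegral_const,
          smul_eq_mul, mul_comm (μ.real Ω)]
    _ ≤ _ := setIntegral_mono (by exact (hsq.const_mul _).sub hconst)
        (integrableOn_of_continuous (g := fun s x => s * (S x - R x) ^ 2 / (2 * τ)
          + α / 2 * ‖∇ S x‖ ^ 2 + β * diffQuotPotential d (R x) (S x)) hΩ hw isCompact_Icc hwb
          (by fun_prop)) hpt

theorem continuous_stepEnergy_sum_smul {T : Set ℝ} (hΩ : IsBounded Ω) (hw : Measurable w)
    (hT : IsCompact T) (hwT : ∀ x, w x ∈ T) (hd : ContDiff ℝ 1 d) (hR : Continuous R)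
    {ι : Type*} [Fintype ι] {b : ι → X → ℝ} (hb : ∀ i, ContDiff ℝ 1 (b i)) :
    Continuous fun y : ι → ℝ => stepEnergy μ Ω α β τ d w R (∑ i, y i • b i) := by
  have hgrad : ∀ (y : ι → ℝ) x, ∇ (∑ i, y i • b i) x = ∑ i, y i • ∇ (b i) x := fun y x => by
    rw [gradient_sum _ fun i _ => ((hb i).differentiable one_ne_zero x).const_smul (y i)]
    exact Finset.sum_congr rfl fun i _ =>
      gradient_const_smul _ ((hb i).differentiable one_ne_zero x)
  have := fun i => (hb i).continuous; have := fun i => (hb i).continuous_gradient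
  have := continuous_diffQuotPotential hd
  simp only [stepEnergy, hgrad, Finset.sum_apply, Pi.smul_apply, smul_eq_mul]
  exact continuous_setIntegral_of_continuous (G := fun s (y : ι → ℝ) x =>
    s * (∑ i, y i * b i x - R x) ^ 2 / (2 * τ) + α / 2 * ‖∑ i, y i • ∇ (b i) x‖ ^ 2
      + β * diffQuotPotential d (R x) (∑ i, y i * b i x)) hΩ hw hT hwT (by fun_prop)

theorem exists_forall_stepEnergy_le {cl cu K : ℝ} (hΩ : IsBounded Ω) (hw : Measurable w)
    (hwb : ∀ x, w x ∈ Icc cl cu) (hcl : 0 < cl) (hα : 0 ≤ α) (hτ : 0 < τ) (hd : ContDiff ℝ 1 d)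
    (hK : ∀ x, |deriv d x| ≤ K) {V : Submodule ℝ (X → ℝ)} [FiniteDimensional ℝ V]
    (hVsmooth : ∀ f ∈ V, ContDiff ℝ 1 f)
    (hVae : ∀ f ∈ V, (∀ᵐ x ∂μ.restrict Ω, f x = 0) → f = 0) (hR : R ∈ V) :
    ∃ S ∈ V, ∀ S' ∈ V, stepEnergy μ Ω α β τ d w R S ≤ stepEnergy μ Ω α β τ d w R S' := by
  set b := Module.finBasis ℝ V
  have hb : ∀ i, ContDiff ℝ 1 (b i : X → ℝ) := fun i => hVsmooth _ (b i).2
  let F : (Fin (Module.finrank ℝ V) → ℝ) →ₗ[ℝ] X → ℝ :=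
    V.subtype ∘ₗ b.equivFun.symm.toLinearMap
  have hF : ∀ y, F y = ∑ i, y i • (b i : X → ℝ) := by
    simp [F, Module.Basis.equivFun_symm_apply]
  have hFmem : ∀ y, F y ∈ V := fun y => (b.equivFun.symm y).2
  have hFinj : Function.Injective F := Subtype.val_injective.comp b.equivFun.symm.injective
  have hFV : ∀ S ∈ V, ∃ y, F y = S := fun S hS => ⟨b.equivFun ⟨S, hS⟩, by simp [F]⟩
  obtain ⟨δ, hδ, hQ⟩ := exists_pos_mul_sq_norm_le_integral_sq (μ := μ) hΩ
    (fun i => (hb i).continuous) fun y hy =>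
      (F.map_eq_zero_iff hFinj).1 (hVae _ (hFmem y) (by rwa [hF]))
  obtain ⟨yR, rfl⟩ := hFV R hR
  have hcont : Continuous fun y => stepEnergy μ Ω α β τ d w (F yR) (F y) := by
    simpa only [hF] using continuous_stepEnergy_sum_smul (μ := μ) (α := α) (β := β) (τ := τ)
      hΩ hw isCompact_Icc hwb hd (hVsmooth _ hR).continuous hb
  set C := τ * (β * K) ^ 2 / cl * μ.real Ω
  have hcoercive :
      Tendsto (fun y => stepEnergy μ Ω α β τ d w (F yR) (F y)) (cocompact _) atTop := by
    refine tendsto_cocompact_atTop_of_sq_dist_le (a := cl / (4 * τ) * δ) (C := C)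
      (by positivity) yR fun y => ?_
    calc cl / (4 * τ) * δ * dist y yR ^ 2 - C
        ≤ cl / (4 * τ) * ∫ x in Ω, (F y x - F yR x) ^ 2 ∂μ - C := by
          rw [dist_eq_norm, mul_assoc]
          gcongr
          have := hQ (y - yR)
          rwa [← hF, map_sub] at this
      _ ≤ _ := le_stepEnergy hΩ hw hwb hcl hα hτ hd hK (hVsmooth _ hR).continuous
          (hVsmooth _ (hFmem y))
  obtain ⟨y₀, hy₀⟩ := hcont.exists_forall_le hcoercive
  exact ⟨F y₀, hFmem y₀, fun S' hS' => by obtain ⟨y, rfl⟩ := hFV S' hS'; exact hy₀ y⟩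

end StepEnergy

theorem implicit_step_exists_general
    {n : ℕ} (Ω : Set (EuclideanSpace ℝ (Fin n)))
    (hΩb : Bornology.IsBounded Ω)
    (α β τ : ℝ) (hα : 0 < α) (hτ : 0 < τ)
    (c : ℝ → ℝ) (hcmeas : Measurable c)
    (cl cu : ℝ) (hcl : 0 < cl) (hcbound : ∀ x, cl ≤ c x ∧ c x ≤ cu)
    (d : ℝ → ℝ) (hd : ContDiff ℝ 1 d)
    (K : ℝ) (hd'bdd : ∀ x : ℝ, |deriv d x| ≤ K)
    (V : Submodule ℝ (EuclideanSpace ℝ (Fin n) → ℝ))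
    (hVfin : FiniteDimensional ℝ V)
    (hVsmooth : ∀ f ∈ V, ContDiff ℝ 1 f)
    (hVae : ∀ f ∈ V, (∀ᵐ x ∂(volume.restrict Ω), f x = 0) → f = 0) :
    ∀ R ∈ V, ∃ S ∈ V, ∀ v ∈ V,
      ∫ x in Ω, (c ‖gradient R x‖ * τ⁻¹ * (S x - R x) * v x
        + α * ⟪gradient S x, gradient v x⟫ + β * diffQuot d (S x) (R x) * v x) = 0 := by
  intro R hR
  have hw : Measurable fun x => c ‖∇ R x‖ :=
    hcmeas.comp (hVsmooth R hR).continuous_gradient.norm.measurable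
  obtain ⟨S, hS, hmin⟩ := exists_forall_stepEnergy_le (β := β) hΩb hw (fun x => hcbound _) hcl
    hα.le hτ hd hd'bdd hVsmooth hVae hR
  refine ⟨S, hS, fun v hv => ?_⟩
  have hlocal : IsLocalMin
      (fun t : ℝ => stepEnergy volume Ω α β τ d (fun x => c ‖∇ R x‖) R (S + t • v)) 0 :=
    Eventually.of_forall fun t => by simpa using hmin _ (V.add_mem hS (V.smul_mem t hv))
  exact hlocal.hasDerivAt_eq_zero (hasDerivAt_stepEnergy_add_smul hΩb hw isCompact_Icc
    (fun x => hcbound _) hd (hVsmooth R hR).continuous (hVsmooth S hS) (hVsmooth v hv))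

/-- existence for the implicit time step, Lemma 4.2: for every
previous iterate `R` in the finite-dimensional Galerkin space `V` of `C¹` functions
(no nonzero element of which vanishes a.e. on `Ω`), the nonlinear problem of one
implicit time step admits at least one solution `S ∈ V`. -/
theorem implicit_step_exists
    {n : ℕ} (Ω : Set (EuclideanSpace ℝ (Fin n)))
    (hΩb : Bornology.IsBounded Ω) (hΩo : IsOpen Ω)
    (α β τ : ℝ) (hα : 0 < α) (hβ : 0 < β) (hτ : 0 < τ)
    (c : ℝ → ℝ) (hcmeas : Measurable c)
    (cl cu : ℝ) (hcl : 0 < cl) (hcbound : ∀ x, cl ≤ c x ∧ c x ≤ cu)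
    (d : ℝ → ℝ) (hd : ContDiff ℝ 1 d) (hdnn : ∀ x, 0 ≤ d x)
    (K : ℝ) (hd'bdd : ∀ x : ℝ, |deriv d x| ≤ K)
    (V : Submodule ℝ (EuclideanSpace ℝ (Fin n) → ℝ))
    (hVfin : FiniteDimensional ℝ V)
    (hVsmooth : ∀ f ∈ V, ContDiff ℝ 1 f)
    (hVae : ∀ f ∈ V, (∀ᵐ x ∂(volume.restrict Ω), f x = 0) → f = 0) :
    ∀ R ∈ V, ∃ S ∈ V, ∀ v ∈ V,
      ∫ x in Ω, (c ‖gradient R x‖ * τ⁻¹ * (S x - R x) * v x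
        + α * ⟪gradient S x, gradient v x⟫ + β * diffQuot d (S x) (R x) * v x) = 0 :=
  implicit_step_exists_general Ω hΩb α β τ hα hτ c hcmeas cl cu hcl hcbound d hd K hd'bdd V hVfin
    hVsmooth hVae
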